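/- arXiv:1703.05547 — 4 statements merged into one kernel-verified Lean document; each statement's English description precedes it below -/
import Mathlib

section
/- For all k ≥ 1 and all (x_1,...,x_k) ∈ ℕ^k, g_k(x_1,...,x_k) < h(k, x_1+...+x_k+1), where g_k(x_1,...,x_k) = Σ_{j=1}^{k} h(j, x_1+...+x_j) and h(p,s) = C(s+p-1, p). -/
/-- h(p,s) = C(s+p-1, p); note h(p,0) = C(p-1,p) = 0 for p ≥ 1. -/
def h (p s : ℕ) : ℕ := Nat.choose (s + p - 1) p

/-- g_k(x_1,…,x_k) = Σ_{j=1}^k h(j, x_1+⋯+x_j), coordinates given by x 0, x 1, …. -/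
def g (k : ℕ) (x : ℕ → ℕ) : ℕ :=
  ∑ j ∈ Finset.range k, h (j + 1) (∑ i ∈ Finset.range (j + 1), x i)

lemma hockey (s : ℕ) : ∀ k, 1 ≤ k →
    (∑ j ∈ Finset.range k, Nat.choose (s + j) (j + 1)) + 1 ≤ Nat.choose (s + k) k := by
  intro k
  induction k with
  | zero => omega
  | succ n ih =>
    intro _
    rcases Nat.eq_zero_or_pos n with hn | hn
    · subst hn
      simp [Nat.choose_one_right]
    · rw [Finset.sum_range_succ]
      have h1 := ih hn
      have h2 : Nat.choose (s + n) n + Nat.choose (s + n) (n + 1)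
          = Nat.choose (s + (n + 1)) (n + 1) := by
        show _ = (s + n + 1).choose (n + 1)
        rw [Nat.choose_succ_succ]
      calc (∑ j ∈ Finset.range n, Nat.choose (s + j) (j + 1))
            + Nat.choose (s + n) (n + 1) + 1
          ≤ Nat.choose (s + n) n + Nat.choose (s + n) (n + 1) := by omega
        _ = _ := h2

theorem stmt2 (k : ℕ) (hk : 1 ≤ k) (x : ℕ → ℕ) :
    g k x < h k ((∑ i ∈ Finset.range k, x i) + 1) := by
  set s := ∑ i ∈ Finset.range k, x i with hs
  have hbound : g k x ≤ ∑ j ∈ Finset.range k, Nat.choose (s + j) (j + 1) := by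
    apply Finset.sum_le_sum
    intro j hj
    have hjk : j + 1 ≤ k := Finset.mem_range.mp hj
    have hsub : (∑ i ∈ Finset.range (j + 1), x i) ≤ s := by
      apply Finset.sum_le_sum_of_subset
      exact Finset.range_subset_range.mpr hjk
    unfold h
    have : (∑ i ∈ Finset.range (j + 1), x i) + (j + 1) - 1
        = (∑ i ∈ Finset.range (j + 1), x i) + j := by omega
    rw [this]
    exact Nat.choose_le_choose _ (by omega)
  have hh : h k (s + 1) = Nat.choose (s + k) k := by
    unfold h; congr 1; omega
  rw [hh]
  have := hockey s k hk
  omega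
end

section
/- For all k ≥ 1 and all (x_1,...,x_k) ∈ ℕ^k, h(k, x_1+...+x_k) ≤ g_k(x_1,...,x_k), where g_k(x_1,...,x_k) = Σ_{j=1}^{k} h(j, x_1+...+x_j) and h(p,s) = C(s+p-1, p). -/
theorem stmt3 (k : ℕ) (hk : 1 ≤ k) (x : ℕ → ℕ) :
    h k (∑ i ∈ Finset.range k, x i) ≤ g k x := by
  have hm : k - 1 ∈ Finset.range k := Finset.mem_range.mpr (by omega)
  have := Finset.single_le_sum
    (f := fun j => h (j + 1) (∑ i ∈ Finset.range (j + 1), x i))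
    (fun i _ => Nat.zero_le _) hm
  simpa [g, Nat.sub_add_cancel hk] using this
end

section
/- If two k-tuples (x_1,...,x_k) and (x'_1,...,x'_k) of natural numbers satisfy g_k(x_1,...,x_k) = g_k(x'_1,...,x'_k) and g_{k-1} is injective, then x_k = x'_k and (x_1,...,x_{k-1}) = (x'_1,...,x'_{k-1}). -/
lemma h_succ_eq (j s : ℕ) : h (j + 1) s = Nat.choose (s + j) (j + 1) := by
  have : s + (j + 1) - 1 = s + j := by omega
  simp [h, this]

lemma g_lt (k : ℕ) (x : ℕ → ℕ) :
    g k x < Nat.choose ((∑ i ∈ Finset.range k, x i) + k) k := by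
  induction k with
  | zero => simp [g]
  | succ m ih =>
    rw [g, Finset.sum_range_succ, ← g]
    have h1 : h (m + 1) (∑ i ∈ Finset.range (m + 1), x i)
        = Nat.choose ((∑ i ∈ Finset.range (m + 1), x i) + m) (m + 1) := h_succ_eq ..
    have h2 : (∑ i ∈ Finset.range m, x i) ≤ ∑ i ∈ Finset.range (m + 1), x i := by
      rw [Finset.sum_range_succ]; omega
    have h3 : Nat.choose ((∑ i ∈ Finset.range m, x i) + m) m
        ≤ Nat.choose ((∑ i ∈ Finset.range (m + 1), x i) + m) m :=
      Nat.choose_le_choose _ (by omega)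
    have h4 : (∑ i ∈ Finset.range (m + 1), x i) + (m + 1)
        = ((∑ i ∈ Finset.range (m + 1), x i) + m) + 1 := by omega
    rw [h4, Nat.choose_succ_succ]
    simp only [Nat.succ_eq_add_one] at *
    omega

lemma h_le_g (m : ℕ) (x : ℕ → ℕ) :
    h (m + 1) (∑ i ∈ Finset.range (m + 1), x i) ≤ g (m + 1) x := by
  exact Finset.single_le_sum (f := fun j => h (j + 1) (∑ i ∈ Finset.range (j + 1), x i))
    (fun _ _ => Nat.zero_le _) (Finset.self_mem_range_succ m)

/-- g_{m+1} determines the total sum of the first m+1 coordinates. -/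
lemma sum_eq_of_g_eq (m : ℕ) (x x' : ℕ → ℕ) (hg : g (m + 1) x = g (m + 1) x') :
    (∑ i ∈ Finset.range (m + 1), x i) = ∑ i ∈ Finset.range (m + 1), x' i := by
  by_contra hne
  wlog hlt : (∑ i ∈ Finset.range (m + 1), x i) < ∑ i ∈ Finset.range (m + 1), x' i
    generalizing x x'
  · exact this x' x hg.symm (Ne.symm hne) (by omega)
  have h1 := g_lt (m + 1) x
  have h2 := h_le_g m x'
  rw [h_succ_eq] at h2
  have h3 : Nat.choose ((∑ i ∈ Finset.range (m + 1), x i) + (m + 1)) (m + 1)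
      ≤ Nat.choose ((∑ i ∈ Finset.range (m + 1), x' i) + m) (m + 1) :=
    Nat.choose_le_choose _ (by omega)
  omega

theorem stmt10 (k : ℕ) (hk : 1 ≤ k) (x x' : ℕ → ℕ)
    (hinj : ∀ y y' : ℕ → ℕ, g (k - 1) y = g (k - 1) y' → ∀ i < k - 1, y i = y' i)
    (hg : g k x = g k x') :
    x (k - 1) = x' (k - 1) ∧ ∀ i < k - 1, x i = x' i := by
  obtain ⟨m, rfl⟩ : ∃ m, k = m + 1 := ⟨k - 1, by omega⟩
  simp only [Nat.add_sub_cancel] at hinj ⊢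
  have hsum := sum_eq_of_g_eq m x x' hg
  have hgm : g m x = g m x' := by
    have e1 : g (m + 1) x = g m x + h (m + 1) (∑ i ∈ Finset.range (m + 1), x i) := by
      rw [g, Finset.sum_range_succ, ← g]
    have e2 : g (m + 1) x' = g m x' + h (m + 1) (∑ i ∈ Finset.range (m + 1), x' i) := by
      rw [g, Finset.sum_range_succ, ← g]
    rw [e1, e2, hsum] at hg
    omega
  have hcoord := hinj x x' hgm
  have hsm : (∑ i ∈ Finset.range m, x i) = ∑ i ∈ Finset.range m, x' i :=
    Finset.sum_congr rfl fun i hi => hcoord i (Finset.mem_range.mp hi)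
  rw [Finset.sum_range_succ, Finset.sum_range_succ, hsm] at hsum
  exact ⟨by omega, hcoord⟩
end

section
/- Two natural-number k-tuples with the same coordinate sum and the same g-value are equal: if x_1+...+x_k = x'_1+...+x'_k and g_k(x_1,...,x_k) = g_k(x'_1,...,x'_k), then (x_1,...,x_k) = (x'_1,...,x'_k). -/
lemma sum_choose_lt (a : ℕ → ℕ) (ha : StrictMono a) (k : ℕ) :
    ∑ j ∈ Finset.range (k + 1), Nat.choose (a j) (j + 1) < Nat.choose (a k + 1) (k + 1) := by
  induction k with
  | zero => simp
  | succ k ih =>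
    rw [Finset.sum_range_succ]
    have h1 : a k + 1 ≤ a (k + 1) := ha (Nat.lt_succ_self k)
    have h2 : Nat.choose (a k + 1) (k + 1) ≤ Nat.choose (a (k + 1)) (k + 1) :=
      Nat.choose_le_choose _ h1
    have h3 : Nat.choose (a (k + 1) + 1) (k + 1 + 1) =
        Nat.choose (a (k + 1)) (k + 1) + Nat.choose (a (k + 1)) (k + 1 + 1) :=
      Nat.choose_succ_succ (a (k + 1)) (k + 1)
    omega

lemma choose_unique (k : ℕ) : ∀ (a b : ℕ → ℕ), StrictMono a → StrictMono b →
    (∑ j ∈ Finset.range k, Nat.choose (a j) (j + 1) =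
      ∑ j ∈ Finset.range k, Nat.choose (b j) (j + 1)) →
    ∀ j < k, a j = b j := by
  induction k with
  | zero => intro a b _ _ _ j hj; omega
  | succ k ih =>
    intro a b ha hb hsum j hj
    have htop : a k = b k := by
      by_contra hne
      rcases Nat.lt_or_ge (a k) (b k) with hlt | hge
      · have h1 := sum_choose_lt a ha k
        have h2 : Nat.choose (b k) (k + 1) ≤
            ∑ j ∈ Finset.range (k + 1), Nat.choose (b j) (j + 1) := by
          rw [Finset.sum_range_succ]; exact Nat.le_add_left _ _
        have h3 : Nat.choose (a k + 1) (k + 1) ≤ Nat.choose (b k) (k + 1) :=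
          Nat.choose_le_choose _ hlt
        omega
      · have hlt : b k < a k := by omega
        have h1 := sum_choose_lt b hb k
        have h2 : Nat.choose (a k) (k + 1) ≤
            ∑ j ∈ Finset.range (k + 1), Nat.choose (a j) (j + 1) := by
          rw [Finset.sum_range_succ]; exact Nat.le_add_left _ _
        have h3 : Nat.choose (b k + 1) (k + 1) ≤ Nat.choose (a k) (k + 1) :=
          Nat.choose_le_choose _ hlt
        omega
    rcases Nat.lt_or_ge j k with hjk | hjk
    · apply ih a b ha hb _ j hjk
      rw [Finset.sum_range_succ, Finset.sum_range_succ, htop] at hsum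
      omega
    · have : j = k := by omega
      rw [this, htop]

theorem stmt18 (k : ℕ) (hk : 1 ≤ k) (x x' : ℕ → ℕ)
    (hsum : ∑ i ∈ Finset.range k, x i = ∑ i ∈ Finset.range k, x' i)
    (hg : g k x = g k x') :
    ∀ i < k, x i = x' i := by
  set a : ℕ → ℕ := fun j => (∑ i ∈ Finset.range (j + 1), x i) + j with ha_def
  set b : ℕ → ℕ := fun j => (∑ i ∈ Finset.range (j + 1), x' i) + j with hb_def
  have ha : StrictMono a := by
    apply strictMono_nat_of_lt_succ
    intro n
    simp only [ha_def, Finset.sum_range_succ]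
    omega
  have hb : StrictMono b := by
    apply strictMono_nat_of_lt_succ
    intro n
    simp only [hb_def, Finset.sum_range_succ]
    omega
  have hga : g k x = ∑ j ∈ Finset.range k, Nat.choose (a j) (j + 1) := by
    unfold g h
    apply Finset.sum_congr rfl
    intro j _
    congr 1
  have hgb : g k x' = ∑ j ∈ Finset.range k, Nat.choose (b j) (j + 1) := by
    unfold g h
    apply Finset.sum_congr rfl
    intro j _
    congr 1
  have key : ∀ j < k, a j = b j := by
    apply choose_unique k a b ha hb
    rw [← hga, ← hgb, hg]
  have keyS : ∀ j < k, (∑ i ∈ Finset.range (j + 1), x i) =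
      (∑ i ∈ Finset.range (j + 1), x' i) := by
    intro j hj
    have := key j hj
    simp only [ha_def, hb_def] at this
    omega
  intro i hi
  cases i with
  | zero =>
    have := keyS 0 hk
    simpa using this
  | succ i =>
    have h1 := keyS i (by omega)
    have h2 := keyS (i + 1) hi
    simp only [Finset.sum_range_succ] at h1 h2
    omega
end
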